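/- arXiv:math/0503493 — 2 statements merged into one kernel-verified Lean document; each statement's English description precedes it below -/
import Mathlib

section
/- Let N ≥ 0 be an integer and define, in polar coordinates (r, θ) on ℝ², φ₊(r,θ) = r^{N+1} cos((N+1)θ)/(1 + r^{2N+2}) and φ₋(r,θ) = r^{N+1} sin((N+1)θ)/(1 + r^{2N+2}). Then Δφ₊ + ρ φ₊ = 0 and Δφ₋ + ρ φ₋ = 0 on ℝ², where ρ(r) = 8(N+1)² r^{2N}/(1 + r^{2N+2})². -/
noncomputable def phiP (N : ℕ) (r θ : ℝ) : ℝ :=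
  r ^ (N+1) * Real.cos ((N+1) * θ) / (1 + r ^ (2*N+2))

noncomputable def phiM (N : ℕ) (r θ : ℝ) : ℝ :=
  r ^ (N+1) * Real.sin ((N+1) * θ) / (1 + r ^ (2*N+2))

noncomputable def fR (N : ℕ) (r : ℝ) : ℝ := r ^ (N+1) / (1 + r ^ (2*N+2))

noncomputable def F1 (N : ℕ) (r : ℝ) : ℝ :=
  ((N+1 : ℝ) * r ^ N - (N+1) * r ^ (3*N+2)) / (1 + r ^ (2*N+2))^2

noncomputable def F2 (N : ℕ) (r : ℝ) : ℝ :=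
  (((N+1 : ℝ) * ((N : ℝ) * r ^ (N-1)) - (N+1) * ((3*N+2 : ℝ) * r ^ (3*N+1)))
      * ((1 + r ^ (2*N+2))^2)
    - ((N+1 : ℝ) * r ^ N - (N+1) * r ^ (3*N+2))
      * (2 * (1 + r ^ (2*N+2)) * ((2*N+2 : ℝ) * r ^ (2*N+1))))
    / ((1 + r ^ (2*N+2))^2)^2

lemma dpos (N : ℕ) (r : ℝ) : 0 < 1 + r ^ (2*N+2) := by
  have h : r ^ (2*N+2) = (r ^ (N+1))^2 := by rw [← pow_mul]; ring_nf
  rw [h]; positivity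

lemma hden (N : ℕ) (x : ℝ) :
    HasDerivAt (fun y : ℝ => 1 + y ^ (2*N+2)) ((2*N+2 : ℝ) * x ^ (2*N+1)) x := by
  have h := (hasDerivAt_pow (2*N+2) x).const_add 1
  have e : 2*N+2-1 = 2*N+1 := by omega
  rw [e] at h
  convert h using 1
  any_goals rfl
  push_cast; ring

lemma hfR (N : ℕ) (x : ℝ) : HasDerivAt (fR N) (F1 N x) x := by
  have h := (hasDerivAt_pow (N+1) x).div (hden N x) (dpos N x).ne'
  have e : N+1-1 = N := by omega
  rw [e] at h
  convert h using 1
  any_goals rfl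
  unfold F1
  congr 1
  push_cast; ring

lemma hF1 (N : ℕ) (x : ℝ) : HasDerivAt (F1 N) (F2 N x) x := by
  have hnum : HasDerivAt (fun y : ℝ => (N+1 : ℝ) * y ^ N - (N+1) * y ^ (3*N+2))
      ((N+1 : ℝ) * ((N : ℝ) * x ^ (N-1)) - (N+1) * ((3*N+2 : ℝ) * x ^ (3*N+1))) x := by
    have h1 := (hasDerivAt_pow N x).const_mul ((N:ℝ)+1)
    have h2 := (hasDerivAt_pow (3*N+2) x).const_mul ((N:ℝ)+1)
    have e : 3*N+2-1 = 3*N+1 := by omega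
    rw [e] at h2
    have := h1.sub h2
    convert this using 1
    any_goals rfl
    push_cast; ring
  have hd2 : HasDerivAt (fun y : ℝ => (1 + y ^ (2*N+2))^2)
      (2 * (1 + x ^ (2*N+2)) * ((2*N+2 : ℝ) * x ^ (2*N+1))) x := by
    have := (hden N x).pow 2
    convert this using 1
    any_goals rfl
    push_cast; ring
  have h := hnum.div hd2 (pow_ne_zero 2 (dpos N x).ne')
  exact h

lemma key (N : ℕ) (r : ℝ) (hr : 0 < r) :
    F2 N r + F1 N r / r - ((N:ℝ)+1)^2 * fR N r / r^2
      + (8*((N:ℝ)+1)^2 * r ^ (2*N) / (1 + r ^ (2*N+2))^2) * fR N r = 0 := by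
  have hd := dpos N r
  have hsub : (N : ℝ) * r ^ (N-1) = (N : ℝ) * r ^ N / r := by
    cases N with
    | zero => simp
    | succ M =>
      have : M + 1 - 1 = M := rfl
      rw [this, pow_succ]
      field_simp
  unfold F2 F1 fR
  rw [hsub]
  field_simp
  ring

lemma hcos' (c t : ℝ) :
    HasDerivAt (fun t : ℝ => Real.cos (c*t)) (-Real.sin (c*t) * c) t := by
  have h := (Real.hasDerivAt_cos (c*t)).comp t ((hasDerivAt_id t).const_mul c)
  simp only [mul_one] at h
  exact h

lemma hsin' (c t : ℝ) :
    HasDerivAt (fun t : ℝ => Real.sin (c*t)) (Real.cos (c*t) * c) t := by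
  have h := (Real.hasDerivAt_sin (c*t)).comp t ((hasDerivAt_id t).const_mul c)
  simp only [mul_one] at h
  exact h

theorem stmt_6 (N : ℕ) :
    ∀ r θ : ℝ, 0 < r →
      (deriv (deriv (fun s : ℝ => phiP N s θ)) r
        + deriv (fun s : ℝ => phiP N s θ) r / r
        + deriv (deriv (fun t : ℝ => phiP N r t)) θ / r^2
        + (8*(N+1)^2 * r ^ (2*N) / (1 + r ^ (2*N+2))^2) * phiP N r θ = 0)
      ∧ (deriv (deriv (fun s : ℝ => phiM N s θ)) r
        + deriv (fun s : ℝ => phiM N s θ) r / r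
        + deriv (deriv (fun t : ℝ => phiM N r t)) θ / r^2
        + (8*(N+1)^2 * r ^ (2*N) / (1 + r ^ (2*N+2))^2) * phiM N r θ = 0) := by
  intro r θ hr
  set k : ℝ := (N : ℝ) + 1 with hk
  have hkey := key N r hr
  rw [← hk] at hkey
  constructor
  · set C : ℝ := Real.cos (k * θ) with hC
    have hP1 : (fun s : ℝ => phiP N s θ) = fun s => fR N s * C := by
      funext s; unfold phiP fR; rw [hC, hk]; ring
    have hd1 : deriv (fun s : ℝ => phiP N s θ) = fun s => F1 N s * C := by
      funext s; rw [hP1]; exact ((hfR N s).mul_const C).deriv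
    have hd2 : deriv (deriv (fun s : ℝ => phiP N s θ)) r = F2 N r * C := by
      rw [hd1]; exact ((hF1 N r).mul_const C).deriv
    have hPθ : (fun t : ℝ => phiP N r t) = fun t => fR N r * Real.cos (k*t) := by
      funext t; unfold phiP fR; rw [hk]; ring
    have hdθ1 : deriv (fun t : ℝ => phiP N r t)
        = fun t => fR N r * (-Real.sin (k*t) * k) := by
      funext t; rw [hPθ]; exact ((hcos' k t).const_mul (fR N r)).deriv
    have hdθ2 : deriv (deriv (fun t : ℝ => phiP N r t)) θ
        = fR N r * (-(Real.cos (k*θ) * k) * k) := by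
      rw [hdθ1]
      exact (((hsin' k θ).neg.mul_const k).const_mul (fR N r)).deriv
    have hphi : phiP N r θ = fR N r * C := by
      unfold phiP fR; rw [hC, hk]; ring
    rw [hd2, hd1, hdθ2, hphi, ← hC]
    push_cast
    linear_combination C * hkey
  · set C : ℝ := Real.sin (k * θ) with hC
    have hP1 : (fun s : ℝ => phiM N s θ) = fun s => fR N s * C := by
      funext s; unfold phiM fR; rw [hC, hk]; ring
    have hd1 : deriv (fun s : ℝ => phiM N s θ) = fun s => F1 N s * C := by
      funext s; rw [hP1]; exact ((hfR N s).mul_const C).deriv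
    have hd2 : deriv (deriv (fun s : ℝ => phiM N s θ)) r = F2 N r * C := by
      rw [hd1]; exact ((hF1 N r).mul_const C).deriv
    have hPθ : (fun t : ℝ => phiM N r t) = fun t => fR N r * Real.sin (k*t) := by
      funext t; unfold phiM fR; rw [hk]; ring
    have hdθ1 : deriv (fun t : ℝ => phiM N r t)
        = fun t => fR N r * (Real.cos (k*t) * k) := by
      funext t; rw [hPθ]; exact ((hsin' k t).const_mul (fR N r)).deriv
    have hdθ2 : deriv (deriv (fun t : ℝ => phiM N r t)) θ
        = fR N r * (-Real.sin (k*θ) * k * k) := by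
      rw [hdθ1]
      exact (((hcos' k θ).mul_const k).const_mul (fR N r)).deriv
    have hphi : phiM N r θ = fR N r * C := by
      unfold phiM fR; rw [hC, hk]; ring
    rw [hd2, hd1, hdθ2, hphi, ← hC]
    push_cast
    linear_combination C * hkey
end

section
/- Let N ≥ 0 be an integer, λ₂ > 0, z₁,…,z_N ∈ ℂ, f(z) = (N+1)∏_{j=1}^N (z − z_j), F(z) = ∫₀^z f(ξ)dξ, and for ε > 0, a ∈ ℂ let ρ(z) = 8ε^{2N+2}|f(z)|² / (λ₂ (1 + ε^{2N+2}|F(z) + a/ε^{N+1}|²)²). Then away from the zeros of f, Δ ln ρ = −λ₂ ρ on ℝ². -/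
open Complex Filter Topology

/-- Second derivative of `u` at `z` along direction `v` in `ℂ = ℝ²`. -/
noncomputable def dirD2 (u : ℂ → ℝ) (v z : ℂ) : ℝ :=
  deriv (deriv (fun s : ℝ => u (z + s • v))) 0

/-- The Laplacian on `ℂ = ℝ²`. -/
noncomputable def lap (u : ℂ → ℝ) (z : ℂ) : ℝ :=
  dirD2 u 1 z + dirD2 u Complex.I z

/-- Auxiliary: the "numerator" appearing in the radial derivative of `log (e + c|g|²)`. -/
noncomputable def nn (g g₁ : ℂ → ℂ) (c : ℝ) (v w : ℂ) : ℝ :=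
  2*c*((g w).re * (v * g₁ w).re + (g w).im * (v * g₁ w).im)

/-- Auxiliary: `e + c |g w|²`. -/
noncomputable def AA (g : ℂ → ℂ) (c e : ℝ) (w : ℂ) : ℝ := e + c * ‖g w‖ ^ 2

lemma curve_hasDerivAt (g g₁ : ℂ → ℂ) (hg : ∀ w, HasDerivAt g (g₁ w) w)
    (v z : ℂ) (s : ℝ) :
    HasDerivAt (fun s : ℝ => g (z + s • v)) (v * g₁ (z + s • v)) s := by
  have h1 : HasDerivAt (fun s : ℝ => z + s • v) ((1:ℝ) • v) s :=
    ((hasDerivAt_id s).smul_const v).const_add z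
  simpa [smul_eq_mul, mul_comm, Function.comp_def] using (hg (z + s • v)).scomp s h1

lemma re_hasDerivAt {γ : ℝ → ℂ} {γ' : ℂ} {s : ℝ} (h : HasDerivAt γ γ' s) :
    HasDerivAt (fun s => (γ s).re) γ'.re s := by
  exact Complex.reCLM.hasFDerivAt.comp_hasDerivAt s h

lemma im_hasDerivAt {γ : ℝ → ℂ} {γ' : ℂ} {s : ℝ} (h : HasDerivAt γ γ' s) :
    HasDerivAt (fun s => (γ s).im) γ'.im s := by
  exact Complex.imCLM.hasFDerivAt.comp_hasDerivAt s h

lemma AA_hasDerivAt (g g₁ : ℂ → ℂ) (hg : ∀ w, HasDerivAt g (g₁ w) w)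
    (c e : ℝ) (v z : ℂ) (s : ℝ) :
    HasDerivAt (fun s : ℝ => AA g c e (z + s • v)) (nn g g₁ c v (z + s • v)) s := by
  have habs : ∀ w : ℂ, (‖w‖ : ℝ) ^ 2 = w.re * w.re + w.im * w.im := by
    intro w; rw [Complex.sq_norm, Complex.normSq_apply]
  have hγ := curve_hasDerivAt g g₁ hg v z
  have hx : ∀ s : ℝ, HasDerivAt (fun s : ℝ => (g (z + s • v)).re)
      ((v * g₁ (z + s • v)).re) s := fun s => re_hasDerivAt (hγ s)
  have hy : ∀ s : ℝ, HasDerivAt (fun s : ℝ => (g (z + s • v)).im)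
      ((v * g₁ (z + s • v)).im) s := fun s => im_hasDerivAt (hγ s)
  have h := ((((hx s).mul (hx s)).add ((hy s).mul (hy s))).const_mul c).const_add e
  have heq : (fun s : ℝ => e + c * ((g (z+s•v)).re * (g (z+s•v)).re
      + (g (z+s•v)).im * (g (z+s•v)).im)) = fun s : ℝ => AA g c e (z + s • v) := by
    funext s; rw [AA, habs]
  simp only [Pi.mul_apply, Pi.add_apply] at h
  rw [heq] at h
  refine h.congr_deriv ?_
  rw [nn]; ring

lemma logAA_hasDerivAt (g g₁ : ℂ → ℂ) (hg : ∀ w, HasDerivAt g (g₁ w) w)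
    (c e : ℝ) (v z : ℂ) (s : ℝ) (hA : AA g c e (z + s • v) ≠ 0) :
    HasDerivAt (fun s : ℝ => Real.log (AA g c e (z + s • v)))
      ((AA g c e (z + s • v))⁻¹ * nn g g₁ c v (z + s • v)) s := by
  exact (Real.hasDerivAt_log hA).comp s (AA_hasDerivAt g g₁ hg c e v z s)

lemma nn_hasDerivAt (g g₁ g₂ : ℂ → ℂ) (hg : ∀ w, HasDerivAt g (g₁ w) w)
    (hg₁ : ∀ w, HasDerivAt g₁ (g₂ w) w) (c : ℝ) (v z : ℂ) (s : ℝ) :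
    HasDerivAt (fun s : ℝ => nn g g₁ c v (z + s • v))
      (2*c*((v * g₁ (z+s•v)).re * (v * g₁ (z+s•v)).re
         + (g (z+s•v)).re * (v * (v * g₂ (z+s•v))).re
         + (v * g₁ (z+s•v)).im * (v * g₁ (z+s•v)).im
         + (g (z+s•v)).im * (v * (v * g₂ (z+s•v))).im)) s := by
  have hγ := curve_hasDerivAt g g₁ hg v z
  have hδ : ∀ s : ℝ, HasDerivAt (fun s : ℝ => v * g₁ (z + s • v))
      (v * (v * g₂ (z + s • v))) s := fun s =>
    (curve_hasDerivAt g₁ g₂ hg₁ v z s).const_mul v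
  have h := ((((re_hasDerivAt (hγ s)).mul (re_hasDerivAt (hδ s))).add
    ((im_hasDerivAt (hγ s)).mul (im_hasDerivAt (hδ s)))).const_mul (2*c))
  simp only [Pi.mul_apply, Pi.add_apply] at h
  refine h.congr_deriv ?_
  ring

lemma D_hasDerivAt (g g₁ g₂ : ℂ → ℂ) (hg : ∀ w, HasDerivAt g (g₁ w) w)
    (hg₁ : ∀ w, HasDerivAt g₁ (g₂ w) w) (c e : ℝ) (v z : ℂ)
    (hA : AA g c e z ≠ 0) :
    HasDerivAt (fun s : ℝ => (AA g c e (z + s • v))⁻¹ * nn g g₁ c v (z + s • v))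
      ((AA g c e z)⁻¹ * (2*c*((v * g₁ z).re * (v * g₁ z).re
         + (g z).re * (v * (v * g₂ z)).re
         + (v * g₁ z).im * (v * g₁ z).im
         + (g z).im * (v * (v * g₂ z)).im))
        - (nn g g₁ c v z)^2 / (AA g c e z)^2) 0 := by
  have h0 : z + (0:ℝ) • v = z := by simp
  have hA0 : AA g c e (z + (0:ℝ) • v) ≠ 0 := by rw [h0]; exact hA
  have hinv := (AA_hasDerivAt g g₁ hg c e v z 0).inv hA0
  have h := hinv.mul (nn_hasDerivAt g g₁ g₂ hg hg₁ c v z 0)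
  refine h.congr_deriv ?_
  simp only [Pi.inv_apply]
  rw [h0]
  field_simp
  ring

lemma lap_congr {u u' : ℂ → ℝ} {z : ℂ} (h : u =ᶠ[nhds z] u') : lap u z = lap u' z := by
  have key : ∀ v : ℂ, dirD2 u v z = dirD2 u' v z := by
    intro v
    have ht : Tendsto (fun s : ℝ => z + s • v) (nhds 0) (nhds z) := by
      have hc : Continuous fun s : ℝ => z + s • v := by continuity
      simpa using hc.tendsto 0
    have h1 : (fun s : ℝ => u (z + s • v)) =ᶠ[nhds (0:ℝ)]
        (fun s : ℝ => u' (z + s • v)) := ht.eventually h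
    exact h1.deriv.deriv_eq
  rw [lap, lap, key 1, key Complex.I]

lemma dirD2_eq {u : ℂ → ℝ} {z v : ℂ} {D : ℝ → ℝ} {L : ℝ}
    (hD : ∀ᶠ s in nhds (0:ℝ), HasDerivAt (fun s : ℝ => u (z + s • v)) (D s) s)
    (hL : HasDerivAt D L 0) : dirD2 u v z = L := by
  rw [dirD2]
  have h1 : deriv (fun s : ℝ => u (z + s • v)) =ᶠ[nhds (0:ℝ)] D :=
    hD.mono fun s hs => hs.deriv
  rw [h1.deriv_eq]
  exact hL.deriv

set_option maxHeartbeats 2000000 in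
theorem stmt_8 (N : ℕ) (l2 : ℝ) (hl2 : 0 < l2) (zs : Fin N → ℂ)
    (ε : ℝ) (hε : 0 < ε) (a : ℂ) (F : ℂ → ℂ)
    (f : ℂ → ℂ) (hf : f = fun z => (N+1) * ∏ j, (z - zs j))
    (hF : ∀ z, HasDerivAt F (f z) z) (hF0 : F 0 = 0)
    (ρ : ℂ → ℝ)
    (hρ : ρ = fun z =>
      8 * ε ^ (2*N+2) * ‖f z‖ ^ 2 /
        (l2 * (1 + ε ^ (2*N+2) * ‖F z + a / (ε:ℂ) ^ (N+1)‖ ^ 2) ^ 2)) :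
    ∀ z : ℂ, f z ≠ 0 → lap (fun w => Real.log (ρ w)) z = - l2 * ρ z := by
  intro z hfz
  classical
  set p : Polynomial ℂ := Polynomial.C ((N:ℂ)+1) * ∏ j, (Polynomial.X - Polynomial.C (zs j))
    with hp
  have hfp : f = fun w => p.eval w := by
    funext w; rw [hf]; simp [hp, Polynomial.eval_prod]
  set f₁ : ℂ → ℂ := fun w => p.derivative.eval w with hf1
  set f₂ : ℂ → ℂ := fun w => p.derivative.derivative.eval w with hf2
  have hfd : ∀ w, HasDerivAt f (f₁ w) w := by
    intro w; rw [hfp]; exact p.hasDerivAt w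
  have hf1d : ∀ w, HasDerivAt f₁ (f₂ w) w := fun w => p.derivative.hasDerivAt w
  set b : ℂ := a / (ε:ℂ)^(N+1) with hb
  set G : ℂ → ℂ := fun w => F w + b with hG
  have hGd : ∀ w, HasDerivAt G (f w) w := fun w => (hF w).add_const b
  set c : ℝ := ε ^ (2*N+2) with hc
  have hcpos : 0 < c := pow_pos hε _
  have hA2pos : ∀ w, 0 < AA G c 1 w := by
    intro w; rw [AA]; positivity
  have habs : ∀ w, f w ≠ 0 → 0 < ‖f w‖ ^ 2 := by
    intro w hw
    have : ‖f w‖ ≠ 0 := norm_ne_zero_iff.mpr hw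
    positivity
  have hA1eq : ∀ w, AA f 1 0 w = ‖f w‖ ^ 2 := by
    intro w; rw [AA]; ring
  have hA1 : ∀ w, f w ≠ 0 → AA f 1 0 w ≠ 0 := by
    intro w hw; rw [hA1eq]; exact (habs w hw).ne'
  have hfc : Continuous f := by rw [hfp]; exact p.continuous
  have hev : ∀ᶠ w in nhds z, f w ≠ 0 := hfc.continuousAt.eventually_ne hfz
  set K : ℝ := Real.log (8*c) - Real.log l2 with hK
  -- replace `log ρ` by a smooth expression near `z`
  have hueq : (fun w => Real.log (ρ w)) =ᶠ[nhds z]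
      (fun w => K + Real.log (AA f 1 0 w) + (-2) * Real.log (AA G c 1 w)) := by
    filter_upwards [hev] with w hw
    rw [hρ]
    have e1 : (1:ℝ) + c * ‖F w + b‖ ^ 2 = AA G c 1 w := rfl
    simp only []
    rw [e1]
    have h8c : (8:ℝ) * c ≠ 0 := by positivity
    have hnum : (8:ℝ) * c * ‖f w‖^2 ≠ 0 := by
      have := habs w hw; positivity
    have hden : l2 * (AA G c 1 w)^2 ≠ 0 := by
      have := hA2pos w; positivity
    rw [Real.log_div hnum hden, Real.log_mul h8c (habs w hw).ne', ← hA1eq w,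
      Real.log_mul hl2.ne' (pow_ne_zero 2 (hA2pos w).ne'), Real.log_pow, hK]
    push_cast
    ring
  rw [lap_congr hueq]
  have main : ∀ v : ℂ, dirD2
      (fun w => K + Real.log (AA f 1 0 w) + (-2) * Real.log (AA G c 1 w)) v z =
      ((AA f 1 0 z)⁻¹ * (2*1*((v * f₁ z).re * (v * f₁ z).re
         + (f z).re * (v * (v * f₂ z)).re
         + (v * f₁ z).im * (v * f₁ z).im
         + (f z).im * (v * (v * f₂ z)).im))
        - (nn f f₁ 1 v z)^2 / (AA f 1 0 z)^2)
      + (-2) * ((AA G c 1 z)⁻¹ * (2*c*((v * f z).re * (v * f z).re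
         + (G z).re * (v * (v * f₁ z)).re
         + (v * f z).im * (v * f z).im
         + (G z).im * (v * (v * f₁ z)).im))
        - (nn G f c v z)^2 / (AA G c 1 z)^2) := by
    intro v
    have ht : Tendsto (fun s : ℝ => z + s • v) (nhds 0) (nhds z) := by
      have hcont : Continuous fun s : ℝ => z + s • v := by continuity
      simpa using hcont.tendsto 0
    have hev0 : ∀ᶠ s in nhds (0:ℝ), f (z + s • v) ≠ 0 := ht.eventually hev
    apply dirD2_eq (D := fun s : ℝ =>
      (AA f 1 0 (z + s • v))⁻¹ * nn f f₁ 1 v (z + s • v)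
      + (-2) * ((AA G c 1 (z + s • v))⁻¹ * nn G f c v (z + s • v)))
    · filter_upwards [hev0] with s hs
      have h1 := (logAA_hasDerivAt f f₁ hfd 1 0 v z s (hA1 _ hs)).const_add K
      have h2 := (logAA_hasDerivAt G f hGd c 1 v z s (hA2pos _).ne').const_mul (-2 : ℝ)
      exact h1.add h2
    · exact (D_hasDerivAt f f₁ f₂ hfd hf1d 1 0 v z (hA1 z hfz)).add
        ((D_hasDerivAt G f f₁ hGd hfd c 1 v z (hA2pos z).ne').const_mul (-2 : ℝ))
  rw [lap, main 1, main Complex.I, hρ]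
  simp only []
  rw [show F z + b = G z from rfl]
  have hP : (f z).re*(f z).re + (f z).im*(f z).im ≠ 0 := by
    have h := hA1 z hfz
    rw [hA1eq z, Complex.sq_norm, Complex.normSq_apply] at h
    exact h
  have hA : (1:ℝ) + c*((G z).re*(G z).re + (G z).im*(G z).im) ≠ 0 := by
    have h := (hA2pos z).ne'
    rw [AA, Complex.sq_norm, Complex.normSq_apply] at h
    exact h
  simp only [nn, AA, Complex.mul_re, Complex.mul_im, Complex.one_re, Complex.one_im,
    Complex.I_re, Complex.I_im, Complex.sq_norm, Complex.normSq_apply, zero_add, one_mul,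
    mul_one, mul_zero, zero_mul, sub_zero, zero_sub, neg_neg, neg_zero]
  field_simp
  ring
end
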